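/- arXiv:0810.1465 — 3 statements merged into one kernel-verified Lean document; each statement's English description precedes it below -/
import Mathlib

section
/- For any A ∈ GL_2(Q) with det(A) > 0, we have Pdet(A) = Pdet(A^{-1}), where Pdet(X) = α_X^2 det(X) and α_X is the smallest positive rational such that α_X·X has integer entries. Moreover, if α_A is the minimal positive rational for which α_A A ∈ M_2(Z), then the minimal positive rational α_{A^{-1}} for A^{-1} equals det(A)·α_A. -/
/-!
If `γ • B` is an integer matrix, then so is its adjugate, and for a `2 × 2` matrix
`adj (γ • B) = γ • adj B = (det B * γ) • B⁻¹`. Hence `det A * α` clears the denominators of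
`A⁻¹`; applying the same fact to `A⁻¹` shows that any `β` clearing the denominators of `A⁻¹`
yields `β / det A ≥ α`, which is minimality. The determinant identity is then `det A⁻¹ = (det A)⁻¹`.
-/

/-- `α` is the smallest positive rational such that `α • A` has integer entries. -/
def IsMinScal (A : Matrix (Fin 2) (Fin 2) ℚ) (α : ℚ) : Prop :=
  0 < α ∧ (∀ i j, ∃ z : ℤ, α * A i j = (z : ℚ)) ∧
    ∀ β : ℚ, 0 < β → (∀ i j, ∃ z : ℤ, β * A i j = (z : ℚ)) → α ≤ β

namespace Matrix

lemma exists_int_adjugate_apply {n : Type*} [Fintype n] [DecidableEq n] (M : Matrix n n ℚ)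
    (hM : ∀ i j, ∃ z : ℤ, M i j = z) (i j : n) : ∃ z : ℤ, M.adjugate i j = z := by
  choose N hN using hM
  have hMN : M = (of N).map (Int.castRingHom ℚ) := ext fun i j => hN i j
  rw [hMN, ← RingHom.mapMatrix_apply, ← RingHom.map_adjugate]
  exact ⟨_, rfl⟩

lemma det_mul_smul_inv_fin_two (B : Matrix (Fin 2) (Fin 2) ℚ) (hB : B.det ≠ 0) (γ : ℚ) :
    (B.det * γ) • B⁻¹ = (γ • B).adjugate := by
  rw [adjugate_smul, Fintype.card_fin, pow_one, inv_def, Ring.inverse_eq_inv', smul_smul,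
    mul_right_comm, mul_inv_cancel₀ hB, one_mul]

lemma exists_int_det_mul_inv_apply (B : Matrix (Fin 2) (Fin 2) ℚ) (hB : B.det ≠ 0) (γ : ℚ)
    (hγ : ∀ i j, ∃ z : ℤ, γ * B i j = z) (i j : Fin 2) :
    ∃ z : ℤ, B.det * γ * B⁻¹ i j = z := by
  have h := congrFun (congrFun (det_mul_smul_inv_fin_two B hB γ) i) j
  rw [smul_apply, smul_eq_mul] at h
  rw [h]
  exact exists_int_adjugate_apply _ hγ i j

end Matrix

open Matrix in
/-- For `A ∈ GL_2^+(ℚ)`, if `α` is the minimal positive rational with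
`α • A ∈ M_2(ℤ)`, then the minimal positive rational for `A⁻¹` is `det(A) · α`, and
`Pdet(A) = Pdet(A⁻¹)`, i.e. `α² · det A = (det A · α)² · det (A⁻¹)`. -/
theorem stmt7 (A : Matrix (Fin 2) (Fin 2) ℚ) (hdet : 0 < A.det)
    (α : ℚ) (hα : IsMinScal A α) :
    IsMinScal A⁻¹ (A.det * α) ∧ α ^ 2 * A.det = (A.det * α) ^ 2 * A⁻¹.det := by
  obtain ⟨hpos, hint, hmin⟩ := hα
  have hdet_inv : A⁻¹.det = A.det⁻¹ := by rw [det_nonsing_inv, Ring.inverse_eq_inv']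
  refine ⟨⟨by positivity, exists_int_det_mul_inv_apply A hdet.ne' α hint, fun β hβ hβint => ?_⟩,
    by rw [hdet_inv]; field_simp⟩
  have hβA : ∀ i j, ∃ z : ℤ, A.det⁻¹ * β * A i j = z := by
    have h := exists_int_det_mul_inv_apply A⁻¹ (by rw [hdet_inv]; positivity) β hβint
    rwa [nonsing_inv_nonsing_inv A (isUnit_iff_ne_zero.mpr hdet.ne'), hdet_inv] at h
  calc A.det * α ≤ A.det * (A.det⁻¹ * β) := by gcongr; exact hmin _ (by positivity) hβA
    _ = β := mul_inv_cancel_left₀ hdet.ne' β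
end

section
/- Let H be a subgroup of PSL_2(R) commensurable with PSL_2(Z). Then every element of H fixing ∞ in the boundary action on P^1(R) is of the form [[1, b],[0,1]] with b ∈ Q; i.e., the stabilizer of ∞ in H consists only of rational translations. -/
open OnePoint

noncomputable section

abbrev SL2R := Matrix.SpecialLinearGroup (Fin 2) ℝ

abbrev PSL2R := SL2R ⧸ Subgroup.center SL2R

/-- The Möbius action of an `SL_2(ℝ)` matrix on `P¹(ℝ) = ℝ ∪ {∞}`. -/
def moeb (A : SL2R) : OnePoint ℝ → OnePoint ℝ := fun x =>
  Option.elim (x : Option ℝ)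
    (if (A : Matrix (Fin 2) (Fin 2) ℝ) 1 0 = 0 then (∞ : OnePoint ℝ)
      else (((A : Matrix (Fin 2) (Fin 2) ℝ) 0 0 / (A : Matrix (Fin 2) (Fin 2) ℝ) 1 0 : ℝ) :
        OnePoint ℝ))
    (fun t =>
      if (A : Matrix (Fin 2) (Fin 2) ℝ) 1 0 * t + (A : Matrix (Fin 2) (Fin 2) ℝ) 1 1 = 0 then
        (∞ : OnePoint ℝ)
      else ((((A : Matrix (Fin 2) (Fin 2) ℝ) 0 0 * t + (A : Matrix (Fin 2) (Fin 2) ℝ) 0 1) /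
        ((A : Matrix (Fin 2) (Fin 2) ℝ) 1 0 * t + (A : Matrix (Fin 2) (Fin 2) ℝ) 1 1) : ℝ) :
          OnePoint ℝ))

/-- An element of `PSL_2(ℝ)` fixes a point of `P¹(ℝ)` if every matrix representing it does. -/
def PSLFixes (x : PSL2R) (p : OnePoint ℝ) : Prop :=
  ∀ A : SL2R, (QuotientGroup.mk A : PSL2R) = x → moeb A p = p

/-- An element of `PSL_2(ℝ)` is parabolic if it is not the identity and fixes a unique
point of `P¹(ℝ)`. -/
def IsParabolicPSL (x : PSL2R) : Prop := x ≠ 1 ∧ ∃! p : OnePoint ℝ, PSLFixes x p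

/-- `C(K)`: the set of points of `P¹(ℝ)` fixed by some parabolic element of `K`. -/
def parabPoints (K : Subgroup PSL2R) : Set (OnePoint ℝ) :=
  {p | ∃ x ∈ K, IsParabolicPSL x ∧ PSLFixes x p}

/-- `PSL_2(ℤ)` as a subgroup of `PSL_2(ℝ)`. -/
def PSL2Z : Subgroup PSL2R :=
  ((QuotientGroup.mk' (Subgroup.center SL2R)).comp
    (Matrix.SpecialLinearGroup.map (Int.castRingHom ℝ))).range

/-- The translation matrix `[[1, b], [0, 1]]` as an element of `SL_2(ℝ)`. -/
def Tmat (b : ℝ) : SL2R :=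
  ⟨!![1, b; 0, 1], by simp [Matrix.det_fin_two_of]⟩

end

/-!
If `x ∈ H` fixes `∞`, lift it to an upper triangular `A = [[a, b], [0, a⁻¹]]` with `a > 0`.
Commensurability gives `n > 0` with `xⁿ ∈ PSL₂(ℤ)`, so `Aⁿ = [[aⁿ, *], [0, a⁻ⁿ]]` is an integer
matrix up to sign; `aⁿ` and `a⁻ⁿ` are then integers with product `1` and `aⁿ > 0`, forcing `a = 1`.
Hence `A` is the translation by `b`, and `Aⁿ` is the translation by `n b ∈ ℤ`, so `b ∈ ℚ`.
-/

open Matrix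
open scoped MatrixGroups

lemma Matrix.pow_apply_fin_two_of_apply_one_zero_eq_zero {R : Type*} [Semiring R]
    {M : Matrix (Fin 2) (Fin 2) R} (hM : M 1 0 = 0) (n : ℕ) :
    (M ^ n) 1 0 = 0 ∧ (M ^ n) 0 0 = M 0 0 ^ n := by
  induction n with
  | zero => simp
  | succ n ih => simp [pow_succ, Matrix.mul_apply, Fin.sum_univ_two, ih.1, ih.2, hM]

lemma Matrix.SpecialLinearGroup.apply_zero_zero_mul_apply_one_one {R : Type*} [CommRing R]
    (A : SL(2, R)) (hA : A 1 0 = 0) : A 0 0 * A 1 1 = 1 := by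
  simpa [-SpecialLinearGroup.det_coe, Matrix.det_fin_two, hA] using A.det_coe

@[simp]
lemma coe_Tmat (b : ℝ) : (Tmat b : Matrix (Fin 2) (Fin 2) ℝ) = !![1, b; 0, 1] := rfl

lemma Tmat_zero : Tmat 0 = 1 := by
  ext : 1
  simp [Matrix.one_fin_two]

lemma Tmat_add (b c : ℝ) : Tmat (b + c) = Tmat b * Tmat c := by
  ext : 1
  simp [add_comm]

lemma Tmat_pow (b : ℝ) (n : ℕ) : Tmat b ^ n = Tmat (n * b) := by
  induction n with
  | zero => simp [Tmat_zero]
  | succ n ih => rw [pow_succ, ih, ← Tmat_add, Nat.cast_succ, add_one_mul]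

lemma eq_Tmat_of_apply_one_zero_eq_zero_of_apply_zero_zero_eq_one {A : SL2R}
    (hc : A 1 0 = 0) (ha : A 0 0 = 1) : A = Tmat (A 0 1) := by
  have hd : A 1 1 = 1 := by simpa [ha] using A.apply_zero_zero_mul_apply_one_one hc
  ext i j
  fin_cases i <;> fin_cases j <;> simp [hc, ha, hd]

lemma apply_one_zero_eq_zero_of_moeb_infty {A : SL2R} (h : moeb A ∞ = ∞) : A 1 0 = 0 := by
  by_contra hc
  simp only [moeb, OnePoint.infty, Option.elim, hc] at h
  exact OnePoint.coe_ne_infty _ h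

lemma neg_one_mem_center_SL2R : (-1 : SL2R) ∈ Subgroup.center SL2R :=
  Subgroup.mem_center_iff.mpr fun g => by rw [mul_neg_one, neg_one_mul]

lemma mk_neg_SL2R (A : SL2R) : (QuotientGroup.mk (-A) : PSL2R) = QuotientGroup.mk A := by
  rw [← mul_neg_one, QuotientGroup.mk_mul, (QuotientGroup.eq_one_iff _).mpr neg_one_mem_center_SL2R,
    mul_one]

lemma eq_one_or_eq_neg_one_of_mem_center_SL2R {z : SL2R} (hz : z ∈ Subgroup.center SL2R) :
    z = 1 ∨ z = -1 := by
  obtain ⟨r, hr, hrz⟩ := Matrix.SpecialLinearGroup.mem_center_iff.mp hz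
  rw [Fintype.card_fin] at hr
  rcases sq_eq_one_iff.mp hr with rfl | rfl
  · left; ext i j; fin_cases i <;> fin_cases j <;> simp [← hrz]
  · right; ext i j; fin_cases i <;> fin_cases j <;> simp [← hrz]

lemma exists_map_eq_of_mk_mem_PSL2Z {C : SL2R} (hC : (QuotientGroup.mk C : PSL2R) ∈ PSL2Z) :
    ∃ B : SL(2, ℤ), Matrix.SpecialLinearGroup.map (Int.castRingHom ℝ) B = C := by
  obtain ⟨B, hB⟩ := hC
  have hcenter := QuotientGroup.eq.mp hB
  rcases eq_one_or_eq_neg_one_of_mem_center_SL2R hcenter with h | h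
  · exact ⟨B, inv_mul_eq_one.mp h⟩
  · refine ⟨-B, ?_⟩
    rw [inv_mul_eq_iff_eq_mul, mul_neg_one] at h
    ext i j
    simp [h]

lemma exists_rep_of_PSLFixes_infty {x : PSL2R} (hx : PSLFixes x ∞) :
    ∃ A : SL2R, QuotientGroup.mk A = x ∧ A 1 0 = 0 ∧ 0 < A 0 0 := by
  obtain ⟨A, rfl⟩ := QuotientGroup.mk_surjective x
  have hc := apply_one_zero_eq_zero_of_moeb_infty (hx A rfl)
  have ha : A 0 0 ≠ 0 := left_ne_zero_of_mul_eq_one (A.apply_zero_zero_mul_apply_one_one hc)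
  rcases ha.lt_or_gt with hneg | hpos
  · exact ⟨-A, mk_neg_SL2R A, by simp [hc], by simpa using hneg⟩
  · exact ⟨A, rfl, hc, hpos⟩

lemma apply_zero_zero_eq_one_of_pow_eq_map {A : SL2R} (hc : A 1 0 = 0) (ha : 0 < A 0 0)
    {n : ℕ} (hn : n ≠ 0) {B : SL(2, ℤ)}
    (hB : Matrix.SpecialLinearGroup.map (Int.castRingHom ℝ) B = A ^ n) : A 0 0 = 1 := by
  obtain ⟨hc', ha'⟩ :=
    pow_apply_fin_two_of_apply_one_zero_eq_zero (M := (A : Matrix (Fin 2) (Fin 2) ℝ)) hc n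
  have hentry (i j : Fin 2) : ((B i j : ℤ) : ℝ) = ((A : Matrix (Fin 2) (Fin 2) ℝ) ^ n) i j := by
    simpa using congrArg (fun g : SL2R => (g : Matrix (Fin 2) (Fin 2) ℝ) i j) hB
  have hB10 : B 1 0 = 0 := by exact_mod_cast (hentry 1 0).trans hc'
  have h00 : ((B 0 0 : ℤ) : ℝ) = A 0 0 ^ n := (hentry 0 0).trans ha'
  have hB00_pos : 0 < B 0 0 := Int.cast_pos.mp (h00 ▸ pow_pos ha n)
  have hB00 : B 0 0 = 1 :=
    Int.eq_one_of_mul_eq_one_right hB00_pos.le (B.apply_zero_zero_mul_apply_one_one hB10)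
  have hpow : A 0 0 ^ n = 1 := by rw [← h00, hB00, Int.cast_one]
  exact (pow_eq_one_iff_of_nonneg ha.le hn).mp hpow

lemma exists_rat_of_Tmat_pow_eq_map {b : ℝ} {n : ℕ} (hn : n ≠ 0) {B : SL(2, ℤ)}
    (hB : Matrix.SpecialLinearGroup.map (Int.castRingHom ℝ) B = Tmat b ^ n) :
    ∃ q : ℚ, (q : ℝ) = b := by
  have h01 : ((B 0 1 : ℤ) : ℝ) = n * b := by
    rw [Tmat_pow] at hB
    exact congrArg (fun A : SL2R => A 0 1) hB
  refine ⟨B 0 1 / n, ?_⟩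
  push_cast
  rw [h01]
  field_simp

/-- If `H ≤ PSL_2(ℝ)` is commensurable with `PSL_2(ℤ)`, then every element of
`H` fixing `∞ ∈ P¹(ℝ)` is of the form `[[1, b], [0, 1]]` with `b ∈ ℚ`. -/
theorem stmt11 (H : Subgroup PSL2R) (hcomm : Subgroup.Commensurable H PSL2Z) :
    ∀ x ∈ H, PSLFixes x (∞ : OnePoint ℝ) →
      ∃ b : ℚ, x = (QuotientGroup.mk (Tmat (b : ℝ)) : PSL2R) := by
  intro x hxH hfix
  obtain ⟨n, hn, -, hxn⟩ := Subgroup.exists_pow_mem_of_relIndex_ne_zero hcomm.2 hxH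
  obtain ⟨A, rfl, hc, ha⟩ := exists_rep_of_PSLFixes_infty hfix
  obtain ⟨B, hB⟩ := exists_map_eq_of_mk_mem_PSL2Z (C := A ^ n) hxn.1
  have hA : A = Tmat (A 0 1) := eq_Tmat_of_apply_one_zero_eq_zero_of_apply_zero_zero_eq_one hc
    (apply_zero_zero_eq_one_of_pow_eq_map hc ha hn.ne' hB)
  rw [hA] at hB
  obtain ⟨q, hq⟩ := exists_rat_of_Tmat_pow_eq_map hn.ne' hB
  exact ⟨q, by rw [hq, ← hA]⟩
end

section
/- If H ≤ PSL_2(R) is commensurable with PSL_2(Z), then H ≤ PGL_2^+(Q); i.e., every element of H can be represented by a 2×2 rational matrix with positive determinant. -/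
open OnePoint

/-!
Let `B = !![a, b; c, d] ∈ SL₂(ℝ)` represent an element of `H`. For an integral matrix `N` with
`N² = 0`, the unipotent `1 + N` lies in `SL₂(ℤ)`, and commensurability puts some power
`B (1 + N)ᵏ B⁻¹ = 1 + k • B N B⁻¹` in `±SL₂(ℤ)`; hence `B N B⁻¹` has rational entries. For
`N = E₀₁`, `E₁₀` and `(1, 1)ᵀ (1, -1)` these entries are, up to sign, `a², c², ac`, then `b², d², bd`,
then `(a + b)², (c + d)², (a + b)(c + d)`, which together with `ad - bc = 1` make every product of
two entries of `B` rational. So for a nonzero entry `e`, `B = |e| • A` with `A` rational and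
`det A = 1 / e² > 0`.
-/

open scoped MatrixGroups

local notation "M₂" => Matrix (Fin 2) (Fin 2)

theorem Subgroup.Commensurable.exists_pow_conj_mem {G : Type*} [Group G] {H K : Subgroup G}
    (hHK : H.Commensurable K) {x u : G} (hx : x ∈ H) (hu : u ∈ K) :
    ∃ k : ℕ, 0 < k ∧ x * u ^ k * x⁻¹ ∈ K := by
  obtain ⟨n, hn, -, hunH, -⟩ := Subgroup.exists_pow_mem_of_relIndex_ne_zero hHK.1 hu
  obtain ⟨m, hm, -, hconjK, -⟩ := Subgroup.exists_pow_mem_of_relIndex_ne_zero hHK.2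
    (H.mul_mem (H.mul_mem hx hunH) (H.inv_mem hx))
  exact ⟨n * m, Nat.mul_pos hn hm, by rwa [conj_pow, ← pow_mul] at hconjK⟩

theorem one_add_pow_of_mul_self_eq_zero {R : Type*} [Semiring R] {N : R} (h : N * N = 0)
    (k : ℕ) : (1 + N) ^ k = 1 + k • N := by
  induction k with
  | zero => simp
  | succ k ih =>
    rw [pow_succ, ih, add_mul, one_mul, mul_add, mul_one, smul_mul_assoc, h, smul_zero,
      add_zero, succ_nsmul, add_assoc, add_comm N]

theorem Subfield.mem_bot_iff_exists_ratCast {K : Type*} [Field K] [CharZero K] {x : K} :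
    x ∈ (⊥ : Subfield K) ↔ ∃ q : ℚ, (q : K) = x := by
  simp [Subfield.bot_eq_of_charZero]

namespace Matrix

theorem SpecialLinearGroup.exists_eq_smul_of_mk_eq {n R : Type*} [Fintype n]
    [DecidableEq n] [CommRing R] {A B : SpecialLinearGroup n R}
    (h : (A : SpecialLinearGroup n R ⧸ Subgroup.center (SpecialLinearGroup n R)) = B) :
    ∃ r : R, r ^ Fintype.card n = 1 ∧ (B : Matrix n n R) = r • (A : Matrix n n R) := by
  obtain ⟨r, hr, hscalar⟩ := SpecialLinearGroup.mem_center_iff.mp (QuotientGroup.eq.mp h)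
  refine ⟨r, hr, ?_⟩
  have hB : (B : Matrix n n R) = A * (A⁻¹ * B : SpecialLinearGroup n R) := by
    rw [← SpecialLinearGroup.coe_mul, mul_inv_cancel_left]
  rw [hB, ← hscalar, scalar_apply, ← smul_one_eq_diagonal, Matrix.mul_smul, mul_one]

theorem exists_pos_smul_map_ratCast_of_mul_mem_bot {m n : Type*} {M : Matrix m n ℝ}
    (hM : M ≠ 0) (h : ∀ i j k l, M i j * M k l ∈ (⊥ : Subfield ℝ)) :
    ∃ c : ℝ, 0 < c ∧ ∃ A : Matrix m n ℚ, M = c • A.map (↑) := by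
  obtain ⟨i₀, j₀, he⟩ : ∃ i j, M i j ≠ 0 := by
    by_contra! h0
    exact hM (Matrix.ext h0)
  set c := |M i₀ j₀|
  have hc : 0 < c := abs_pos.mpr he
  have hcM (i j) : c * M i j ∈ (⊥ : Subfield ℝ) := by
    rcases abs_choice (M i₀ j₀) with hc' | hc'
    · simp only [c, hc']; exact h _ _ _ _
    · simp only [c, hc', neg_mul]; exact neg_mem (h _ _ _ _)
  have hcc : c * c ∈ (⊥ : Subfield ℝ) := by rw [abs_mul_abs_self]; exact h _ _ _ _
  -- `M i j = c * (c * M i j / (c * c))`, and the last factor is rational.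
  choose q hq using fun i j => Subfield.mem_bot_iff_exists_ratCast.mp (div_mem (hcM i j) hcc)
  refine ⟨c, hc, of q, ?_⟩
  ext i j
  simp only [smul_apply, map_apply, of_apply, hq, smul_eq_mul]
  field_simp

theorem det_pos_of_eq_smul_map_ratCast {n : Type*} [Fintype n] [DecidableEq n]
    {M : Matrix n n ℝ} {c : ℝ} {A : Matrix n n ℚ} (hM : 0 < M.det) (hc : 0 < c)
    (h : M = c • A.map (↑)) : 0 < A.det := by
  rw [h, det_smul, ← Rat.coe_castHom, ← RingHom.mapMatrix_apply, ← RingHom.map_det] at hM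
  exact_mod_cast (pos_of_mul_pos_right hM (by positivity) : (0 : ℝ) < A.det)

end Matrix

theorem conj_entry_mem_bot_of_mul_self_eq_zero {H : Subgroup PSL2R}
    (hcomm : H.Commensurable PSL2Z) {B : SL2R} (hB : (B : PSL2R) ∈ H) (N : M₂ ℤ)
    (hN : N * N = 0) (hdet : (1 + N).det = 1) (i j : Fin 2) :
    ((B : M₂ ℝ) * (Int.castRingHom ℝ).mapMatrix N * ((B⁻¹ : SL2R) : M₂ ℝ) : M₂ ℝ) i j ∈
      (⊥ : Subfield ℝ) := by
  set Nℝ := (Int.castRingHom ℝ).mapMatrix N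
  obtain ⟨W, hW⟩ : ∃ W : SL(2, ℤ), (W : M₂ ℤ) = 1 + N := ⟨⟨1 + N, hdet⟩, rfl⟩
  set U := Matrix.SpecialLinearGroup.map (Int.castRingHom ℝ) W with hUdef
  have hU : (U : M₂ ℝ) = 1 + Nℝ := by
    rw [hUdef, Matrix.SpecialLinearGroup.map_apply_coe, hW, map_add, map_one]
  have hNN : Nℝ * Nℝ = 0 := by rw [← map_mul, hN, map_zero]
  obtain ⟨k, hk, V, hV⟩ := hcomm.exists_pow_conj_mem hB (⟨W, rfl⟩ : (U : PSL2R) ∈ PSL2Z)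
  rw [← QuotientGroup.mk_pow, ← QuotientGroup.mk_inv, ← QuotientGroup.mk_mul,
    ← QuotientGroup.mk_mul] at hV
  obtain ⟨r, hr, hrV⟩ := Matrix.SpecialLinearGroup.exists_eq_smul_of_mk_eq hV
  have hBB : (B : M₂ ℝ) * ((B⁻¹ : SL2R) : M₂ ℝ) = 1 := by
    rw [← Matrix.SpecialLinearGroup.coe_mul, mul_inv_cancel, Matrix.SpecialLinearGroup.coe_one]
  have hconj : (k : ℝ) • ((B : M₂ ℝ) * Nℝ * ((B⁻¹ : SL2R) : M₂ ℝ)) =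
      r • (Matrix.SpecialLinearGroup.map (Int.castRingHom ℝ) V : M₂ ℝ) - 1 := by
    rw [← hrV]
    simp only [Matrix.SpecialLinearGroup.coe_mul, Matrix.SpecialLinearGroup.coe_pow, hU,
      one_add_pow_of_mul_self_eq_zero hNN, mul_add, add_mul, mul_one, hBB,
      ← Nat.cast_smul_eq_nsmul ℝ, mul_smul_comm, smul_mul_assoc, add_sub_cancel_left]
  have hr' : r ∈ (⊥ : Subfield ℝ) := by
    rcases sq_eq_one_iff.mp (by simpa only [Fintype.card_fin] using hr) with rfl | rfl
    · exact one_mem _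
    · exact neg_mem (one_mem _)
  have hcast (M : M₂ ℤ) : (Int.castRingHom ℝ).mapMatrix M i j ∈ (⊥ : Subfield ℝ) :=
    intCast_mem _ (M i j)
  have hentry := congrFun (congrFun hconj i) j
  rw [Matrix.smul_apply, smul_eq_mul] at hentry
  rw [eq_div_of_mul_eq (by positivity) ((mul_comm _ _).trans hentry)]
  refine div_mem (sub_mem (mul_mem hr' (hcast V)) ?_) (natCast_mem _ k)
  simpa only [map_one] using hcast 1

theorem SL2R.entry_mul_entry_mem_bot_of_conj (B : SL2R)
    (hconj : ∀ N : M₂ ℤ, N * N = 0 → (1 + N).det = 1 → ∀ i j,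
      ((B : M₂ ℝ) * (Int.castRingHom ℝ).mapMatrix N * ((B⁻¹ : SL2R) : M₂ ℝ) : M₂ ℝ) i j ∈
        (⊥ : Subfield ℝ))
    (i j k l : Fin 2) : B i j * B k l ∈ (⊥ : Subfield ℝ) := by
  have h₁ := hconj !![0, 1; 0, 0] (by decide) (by decide)
  have h₂ := hconj !![0, 0; 1, 0] (by decide) (by decide)
  have h₃ := hconj !![1, -1; 1, -1] (by decide) (by decide)
  have hac := h₁ 0 0
  have haa := h₁ 0 1
  have hcc := h₁ 1 0
  have hbd := h₂ 0 0
  have hbb := h₂ 0 1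
  have hdd := h₂ 1 0
  have habcd := h₃ 0 0
  have habab := h₃ 0 1
  have hcdcd := h₃ 1 0
  simp only [Matrix.SpecialLinearGroup.coe_inv, Matrix.adjugate_fin_two, Matrix.mul_apply,
    Fin.sum_univ_two, RingHom.mapMatrix_apply, Matrix.map_apply, Matrix.of_apply,
    Matrix.cons_val', Matrix.cons_val_zero, Matrix.cons_val_one, Matrix.empty_val',
    Matrix.cons_val_fin_one, eq_intCast, Int.cast_one, Int.cast_neg, Int.cast_zero]
    at hac haa hcc hbd hbb hdd habcd habab hcdcd
  ring_nf at hac haa hcc hbd hbb hdd habcd habab hcdcd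
  simp only [neg_mem_iff] at hac hcc hbb habab
  have hdet : B 0 0 * B 1 1 - B 0 1 * B 1 0 = 1 := by
    rw [← Matrix.det_fin_two]; exact B.det_coe
  have two : (2 : ℝ) ∈ (⊥ : Subfield ℝ) := ofNat_mem _ 2
  have hab : B 0 0 * B 0 1 ∈ (⊥ : Subfield ℝ) := by
    convert div_mem (neg_mem (add_mem (add_mem habab haa) hbb)) two using 1; ring
  have hcd : B 1 0 * B 1 1 ∈ (⊥ : Subfield ℝ) := by
    convert div_mem (sub_mem (sub_mem hcdcd hcc) hdd) two using 1; ring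
  have had : B 0 0 * B 1 1 ∈ (⊥ : Subfield ℝ) := by
    convert div_mem (add_mem (sub_mem (sub_mem habcd hac) hbd) (one_mem _)) two using 1
    linear_combination hdet / 2
  have hbc : B 0 1 * B 1 0 ∈ (⊥ : Subfield ℝ) := by
    convert div_mem (sub_mem (sub_mem (sub_mem habcd hac) hbd) (one_mem _)) two using 1
    linear_combination -hdet / 2
  fin_cases i <;> fin_cases j <;> fin_cases k <;> fin_cases l <;>
    simp only [Fin.zero_eta, Fin.mk_one] <;> ring_nf at hab hcd had hbc ⊢ <;> assumption

/-- If `H ≤ PSL_2(ℝ)` is commensurable with `PSL_2(ℤ)`, then every element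
of `H` can be represented by a rational `2 × 2` matrix with positive determinant (up to a
positive real scalar making the determinant `1`). -/
theorem stmt15 (H : Subgroup PSL2R) (hcomm : Subgroup.Commensurable H PSL2Z) :
    ∀ x ∈ H, ∃ (B : SL2R) (A : Matrix (Fin 2) (Fin 2) ℚ) (c : ℝ),
      (QuotientGroup.mk B : PSL2R) = x ∧ 0 < A.det ∧ 0 < c ∧
        (B : Matrix (Fin 2) (Fin 2) ℝ) = c • A.map ((↑) : ℚ → ℝ) := by
  intro x hx
  obtain ⟨B, rfl⟩ := QuotientGroup.mk_surjective x
  have hdet : (B : M₂ ℝ).det = 1 := B.det_coe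
  have hB : (B : M₂ ℝ) ≠ 0 := fun h => by simp [h] at hdet
  obtain ⟨c, hc, A, hBA⟩ := Matrix.exists_pos_smul_map_ratCast_of_mul_mem_bot hB
    (SL2R.entry_mul_entry_mem_bot_of_conj B fun N hN hN' =>
      conj_entry_mem_bot_of_mul_self_eq_zero hcomm hx N hN hN')
  exact ⟨B, A, c, rfl, Matrix.det_pos_of_eq_smul_map_ratCast (by rw [hdet]; exact one_pos) hc hBA,
    hc, hBA⟩
end
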